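/- (Lemma 3, first equation) Let ν ∈ ℝ and let ω⁺_ν(x) = e^(−x) ρ_ν(x). Then ω⁺_ν is twice differentiable on (0,∞) and satisfies the second-order differential equation x·(ω⁺_ν)''(x) + (2x − ν + 1)·(ω⁺_ν)'(x) + (x − ν)·ω⁺_ν(x) = 0 for all x > 0. -/

import Mathlib

open Real MeasureTheory

open Set Filter Topology


lemma cont_integrand (ν x : ℝ) :
    ContinuousOn (fun t : ℝ => t ^ (ν - 1) * Real.exp (-t - x / t)) (Set.Ioi 0) := by
  intro t ht
  have ht' : (t : ℝ) ≠ 0 := ne_of_gt ht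
  exact ((Real.continuousAt_rpow_const t (ν - 1) (Or.inl ht')).mul
    ((Real.continuous_exp.continuousAt).comp
      (((continuousAt_id).neg.sub ((continuousAt_const).div continuousAt_id ht'))))).continuousWithinAt

lemma rho_integrableOn (ν : ℝ) {x : ℝ} (hx : 0 < x) :
    IntegrableOn (fun t : ℝ => t ^ (ν - 1) * Real.exp (-t - x / t)) (Set.Ioi 0) := by
  have hcont := cont_integrand ν x
  -- part on Ioi 1
  have h1 : IntegrableOn (fun t : ℝ => t ^ (ν - 1) * Real.exp (-t - x / t)) (Set.Ioi 1) := by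
    set s := max ν 1 with hs
    have hs0 : 0 < s := lt_of_lt_of_le one_pos (le_max_right _ _)
    have hG : IntegrableOn (fun t : ℝ => Real.exp (-t) * t ^ (s - 1)) (Set.Ioi 1) :=
      (Real.GammaIntegral_convergent hs0).mono_set (Set.Ioi_subset_Ioi one_pos.le)
    refine Integrable.mono hG ((hcont.mono (Set.Ioi_subset_Ioi one_pos.le)).aestronglyMeasurable
      measurableSet_Ioi) ?_
    filter_upwards [self_mem_ae_restrict measurableSet_Ioi] with t ht
    have ht1 : (1:ℝ) ≤ t := le_of_lt ht
    have ht0 : (0:ℝ) < t := lt_of_lt_of_le one_pos ht1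
    rw [Real.norm_eq_abs, Real.norm_eq_abs, abs_of_nonneg (by positivity), abs_of_nonneg (by positivity)]
    have hb : t ^ (ν - 1) ≤ t ^ (s - 1) :=
      Real.rpow_le_rpow_of_exponent_le ht1 (by simp [hs, sub_le_sub_right, le_max_left])
    have he : Real.exp (-t - x / t) ≤ Real.exp (-t) :=
      Real.exp_le_exp.2 (by nlinarith [div_nonneg hx.le ht0.le])
    calc t ^ (ν - 1) * Real.exp (-t - x / t) ≤ t ^ (s-1) * Real.exp (-t) := by
          exact mul_le_mul hb he (by positivity) (by positivity)
      _ = Real.exp (-t) * t ^ (s-1) := mul_comm _ _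
  -- part on Ioc 0 1
  have h2 : IntegrableOn (fun t : ℝ => t ^ (ν - 1) * Real.exp (-t - x / t)) (Set.Ioc 0 1) := by
    obtain ⟨k, hk⟩ := exists_nat_gt (-ν)
    have hpow : IntegrableOn (fun t : ℝ => (Nat.factorial k / x ^ k) * t ^ (ν - 1 + k)) (Set.Ioc 0 1) := by
      have : IntegrableOn (fun t : ℝ => t ^ (ν - 1 + k)) (Set.Ioc 0 1) := by
        have := intervalIntegral.intervalIntegrable_rpow' (a := 0) (b := 1)
          (r := ν - 1 + k) (by push_cast; linarith)
        rwa [intervalIntegrable_iff_integrableOn_Ioc_of_le one_pos.le] at this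
      exact this.const_mul _
    refine Integrable.mono hpow ((hcont.mono Set.Ioc_subset_Ioi_self).aestronglyMeasurable
      measurableSet_Ioc) ?_
    filter_upwards [self_mem_ae_restrict measurableSet_Ioc] with t ht
    have ht0 : (0:ℝ) < t := ht.1
    rw [Real.norm_eq_abs, Real.norm_eq_abs, abs_of_nonneg (by positivity), abs_of_nonneg (by positivity)]
    have hu : (0:ℝ) ≤ x / t := div_nonneg hx.le ht0.le
    have hek : (0:ℝ) < Real.exp (x/t) := Real.exp_pos _
    have h1' : Real.exp (-t - x/t) ≤ Real.exp (-(x/t)) :=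
      Real.exp_le_exp.2 (by linarith)
    have h2 : (x/t) ^ k / (Nat.factorial k) ≤ Real.exp (x/t) :=
      Real.pow_div_factorial_le_exp _ hu k
    have hmul : Real.exp (-(x/t)) * Real.exp (x/t) = 1 := by
      rw [← Real.exp_add]; simp
    have h2' : (x/t)^k ≤ (Nat.factorial k) * Real.exp (x/t) := by
      rw [div_le_iff₀ (by positivity)] at h2
      linarith
    have h5 : Real.exp (-(x/t)) * (x/t)^k ≤ (Nat.factorial k) := by
      calc Real.exp (-(x/t)) * (x/t)^k
          ≤ Real.exp (-(x/t)) * ((Nat.factorial k) * Real.exp (x/t)) :=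
            mul_le_mul_of_nonneg_left h2' (Real.exp_pos _).le
        _ = (Nat.factorial k) * (Real.exp (-(x/t)) * Real.exp (x/t)) := by ring
        _ = (Nat.factorial k) := by rw [hmul, mul_one]
    have hxk : (0:ℝ) < x^k := pow_pos hx k
    have htk : (0:ℝ) < t^k := pow_pos ht0 k
    have h6 : Real.exp (-(x/t)) ≤ (Nat.factorial k) / x^k * t^(k:ℕ) := by
      rw [div_pow] at h5
      rw [div_mul_eq_mul_div, le_div_iff₀ hxk]
      have h7 := mul_le_mul_of_nonneg_right h5 htk.le
      calc Real.exp (-(x/t)) * x ^ k = Real.exp (-(x/t)) * (x^k / t^k) * t^k := by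
            field_simp
        _ ≤ (Nat.factorial k) * t^k := h7
    have hsplit : t ^ (ν - 1 + k) = t^(ν-1) * t^(k:ℕ) := by
      rw [Real.rpow_add ht0, Real.rpow_natCast]
    calc t^(ν-1) * Real.exp (-t-x/t) ≤ t^(ν-1) * ((Nat.factorial k)/x^k * t^(k:ℕ)) :=
          mul_le_mul_of_nonneg_left (h1'.trans h6) (Real.rpow_nonneg ht0.le _)
      _ = (Nat.factorial k)/x^k * t^(ν-1+k) := by rw [hsplit]; ring
  rw [← Set.Ioc_union_Ioi_eq_Ioi (le_of_lt one_pos) (α := ℝ)]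
  exact h2.union h1


/-- The scaled Macdonald function `ρ_ν(x) = ∫₀^∞ t^(ν−1) e^(−t − x/t) dt`. -/
noncomputable def rho (ν x : ℝ) : ℝ :=
  ∫ t in Set.Ioi (0 : ℝ), t ^ (ν - 1) * Real.exp (-t - x / t)


lemma rho_hasDerivAt (ν : ℝ) {x : ℝ} (hx : 0 < x) :
    HasDerivAt (rho ν) (-(rho (ν - 1) x)) x := by
  have hε : (0:ℝ) < x/2 := by linarith
  have key := hasDerivAt_integral_of_dominated_loc_of_deriv_le (μ := volume.restrict (Set.Ioi (0:ℝ)))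
    (F := fun y t => t ^ (ν - 1) * Real.exp (-t - y / t))
    (F' := fun y t => -(t ^ (ν - 1 - 1) * Real.exp (-t - y / t)))
    (x₀ := x) (s := Metric.ball x (x/2)) (bound := fun t => t ^ (ν - 1 - 1) * Real.exp (-t - (x/2) / t))
    (Metric.ball_mem_nhds x hε)
    (Eventually.of_forall fun y =>
      (cont_integrand ν y).aestronglyMeasurable measurableSet_Ioi)
    (rho_integrableOn ν hx)
    (((cont_integrand (ν-1) x).aestronglyMeasurable measurableSet_Ioi).neg)
    ?_ (rho_integrableOn (ν-1) hε) ?_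
  · have h2 := key.2
    simp only [integral_neg] at h2
    exact h2
  · -- bound
    filter_upwards [self_mem_ae_restrict measurableSet_Ioi] with t ht y hy
    have ht0 : (0:ℝ) < t := ht
    have hy2 : x/2 < y := by
      have h := mem_ball_iff_norm.1 hy
      rw [Real.norm_eq_abs, abs_lt] at h
      linarith [h.1]
    rw [norm_neg, Real.norm_eq_abs, abs_of_nonneg (by positivity)]
    have : Real.exp (-t - y/t) ≤ Real.exp (-t - (x/2)/t) := by
      apply Real.exp_le_exp.2
      have : (x/2)/t ≤ y/t := by gcongr
      linarith
    exact mul_le_mul_of_nonneg_left this (Real.rpow_nonneg ht0.le _)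
  · -- differentiability
    filter_upwards [self_mem_ae_restrict measurableSet_Ioi] with t ht y hy
    have ht0 : (0:ℝ) < t := ht
    have h1 : HasDerivAt (fun y : ℝ => -t - y / t) (-(1/t)) y := by
      exact ((hasDerivAt_id' y).div_const t).const_sub (-t)
    have h2 : HasDerivAt (fun y : ℝ => Real.exp (-t - y / t)) (Real.exp (-t - y/t) * (-(1/t))) y :=
      (Real.hasDerivAt_exp _).comp y h1
    have h3 := h2.const_mul (t ^ (ν - 1))
    refine h3.congr_deriv ?_
    rw [Real.rpow_sub ht0 (ν - 1) 1, Real.rpow_one]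
    field_simp


lemma rho_rec (ν : ℝ) {x : ℝ} (hx : 0 < x) :
    rho ν x = (ν - 1) * rho (ν - 1) x + x * rho (ν - 2) x := by
  set g : ℝ → ℝ := fun t => if t ≤ 0 then 0 else t ^ (ν - 1) * Real.exp (-t - x / t) with hg
  set f' : ℝ → ℝ := fun t =>
    (ν - 1) * (t ^ (ν - 1 - 1) * Real.exp (-t - x / t))
      - t ^ (ν - 1) * Real.exp (-t - x / t)
      + x * (t ^ (ν - 2 - 1) * Real.exp (-t - x / t)) with hf'
  -- derivative
  have hderiv : ∀ t ∈ Set.Ioi (0:ℝ), HasDerivAt g (f' t) t := by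
    intro t ht
    have ht0 : (0:ℝ) < t := ht
    have h1 : HasDerivAt (fun t : ℝ => t ^ (ν - 1)) ((ν - 1) * t ^ (ν - 1 - 1)) t :=
      Real.hasDerivAt_rpow_const (Or.inl ht0.ne')
    have h2 : HasDerivAt (fun t : ℝ => -t - x / t) (-1 + x / t ^ 2) t := by
      have ha : HasDerivAt (fun t : ℝ => x / t) (x * -(t ^ 2)⁻¹) t := by
        simpa [div_eq_mul_inv] using (hasDerivAt_inv ht0.ne').const_mul x
      have := ((hasDerivAt_id t).neg).sub ha
      refine this.congr_deriv ?_
      ring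
    have h3 : HasDerivAt (fun t : ℝ => Real.exp (-t - x / t))
        (Real.exp (-t - x / t) * (-1 + x / t ^ 2)) t := (Real.hasDerivAt_exp _).comp t h2
    have h4 := h1.mul h3
    have heq : g =ᶠ[𝓝 t] fun t => t ^ (ν - 1) * Real.exp (-t - x / t) := by
      filter_upwards [Ioi_mem_nhds ht0] with s hs
      simp [hg, not_le.2 (show (0:ℝ) < s from hs)]
    refine (h4.congr_of_eventuallyEq heq).congr_deriv ?_
    have e1 : t ^ (ν - 1 - 1) = t ^ (ν - 1) / t := by
      rw [Real.rpow_sub ht0, Real.rpow_one]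
    have e2 : t ^ (ν - 2 - 1) = t ^ (ν - 1) / t ^ 2 := by
      rw [show ν - 2 - 1 = ν - 1 - (2:ℕ) by push_cast; ring,
        Real.rpow_sub ht0, Real.rpow_natCast]
    simp only [hf', e1, e2]
    field_simp
    ring
  -- continuity at 0
  have hcont : ContinuousWithinAt g (Set.Ici 0) 0 := by
    rw [← Set.Ioi_insert, continuousWithinAt_insert_self]
    have hg0 : g 0 = 0 := by simp [hg]
    rw [ContinuousWithinAt, hg0]
    have hbigH : Tendsto (fun u : ℝ => u ^ (1 - ν) * Real.exp (-x * u)) atTop (𝓝 0) :=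
      tendsto_rpow_mul_exp_neg_mul_atTop_nhds_zero (1 - ν) x hx
    have hcomp : Tendsto (fun t : ℝ => (t⁻¹) ^ (1 - ν) * Real.exp (-x * t⁻¹))
        (𝓝[>] (0:ℝ)) (𝓝 0) := hbigH.comp tendsto_inv_nhdsGT_zero
    refine squeeze_zero' ?_ ?_ hcomp
    · filter_upwards [self_mem_nhdsWithin] with t ht
      have ht0 : (0:ℝ) < t := ht
      simp [hg, not_le.2 ht0]
      positivity
    · filter_upwards [self_mem_nhdsWithin] with t ht
      have ht0 : (0:ℝ) < t := ht
      have e3 : (t⁻¹) ^ (1 - ν) = t ^ (ν - 1) := by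
        rw [Real.inv_rpow ht0.le, ← Real.rpow_neg ht0.le, neg_sub]
      rw [e3]
      simp only [hg, if_neg (not_le.2 ht0)]
      have : Real.exp (-t - x / t) ≤ Real.exp (-x * t⁻¹) := by
        apply Real.exp_le_exp.2
        rw [neg_mul, ← div_eq_mul_inv]
        linarith
      exact mul_le_mul_of_nonneg_left this (Real.rpow_nonneg ht0.le _)
  -- tendsto at top
  have htop : Tendsto g atTop (𝓝 0) := by
    have hbig : Tendsto (fun t : ℝ => t ^ (ν - 1) * Real.exp (-1 * t)) atTop (𝓝 0) :=
      tendsto_rpow_mul_exp_neg_mul_atTop_nhds_zero (ν - 1) 1 one_pos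
    refine squeeze_zero' ?_ ?_ hbig
    · filter_upwards [eventually_gt_atTop (0:ℝ)] with t ht0
      simp only [hg, if_neg (not_le.2 ht0)]
      positivity
    · filter_upwards [eventually_gt_atTop (0:ℝ)] with t ht0
      simp only [hg, if_neg (not_le.2 ht0)]
      have : Real.exp (-t - x / t) ≤ Real.exp (-1 * t) := by
        apply Real.exp_le_exp.2
        have := div_nonneg hx.le ht0.le
        linarith
      exact mul_le_mul_of_nonneg_left this (Real.rpow_nonneg ht0.le _)
  -- integrability of f'
  have hA := rho_integrableOn (ν - 1) hx
  have hB := rho_integrableOn ν hx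
  have hC := rho_integrableOn (ν - 2) hx
  have hA' : Integrable (fun t : ℝ => (ν - 1) * (t ^ (ν - 1 - 1) * Real.exp (-t - x / t)))
      (volume.restrict (Set.Ioi 0)) := hA.const_mul _
  have hC' : Integrable (fun t : ℝ => x * (t ^ (ν - 2 - 1) * Real.exp (-t - x / t)))
      (volume.restrict (Set.Ioi 0)) := hC.const_mul _
  have hAB : Integrable (fun t : ℝ => (ν - 1) * (t ^ (ν - 1 - 1) * Real.exp (-t - x / t))
      - t ^ (ν - 1) * Real.exp (-t - x / t)) (volume.restrict (Set.Ioi 0)) := hA'.sub hB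
  have hint : IntegrableOn f' (Set.Ioi (0:ℝ)) := hAB.add hC'
  have hFTC := MeasureTheory.integral_Ioi_of_hasDerivAt_of_tendsto hcont hderiv hint htop
  have hg0 : g 0 = 0 := by simp [hg]
  rw [hg0, sub_zero] at hFTC
  have hsplit : ∫ t in Set.Ioi (0:ℝ), f' t =
      (ν - 1) * rho (ν - 1) x - rho ν x + x * rho (ν - 2) x := by
    simp only [hf']
    rw [MeasureTheory.integral_add hAB hC', MeasureTheory.integral_sub hA' hB,
      MeasureTheory.integral_const_mul, MeasureTheory.integral_const_mul]
    rfl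
  rw [hsplit] at hFTC
  linarith

theorem lemma3_first (ν : ℝ) :
    (∀ x : ℝ, 0 < x →
      DifferentiableAt ℝ (fun y => Real.exp (-y) * rho ν y) x ∧
      DifferentiableAt ℝ (deriv fun y => Real.exp (-y) * rho ν y) x) ∧
    ∀ x : ℝ, 0 < x →
      x * deriv (deriv fun y => Real.exp (-y) * rho ν y) x +
        (2 * x - ν + 1) * deriv (fun y => Real.exp (-y) * rho ν y) x +
        (x - ν) * (Real.exp (-x) * rho ν x) = 0 := by
  set w' : ℝ → ℝ := fun y => -(Real.exp (-y) * rho ν y) - Real.exp (-y) * rho (ν - 1) y with hw'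
  have he : ∀ x : ℝ, HasDerivAt (fun y : ℝ => Real.exp (-y)) (-Real.exp (-x)) x := by
    intro x
    simpa [Function.comp_def] using (Real.hasDerivAt_exp (-x)).comp x ((hasDerivAt_id x).neg)
  have hω : ∀ x : ℝ, 0 < x →
      HasDerivAt (fun y => Real.exp (-y) * rho ν y) (w' x) x := by
    intro x hx
    refine ((he x).mul (rho_hasDerivAt ν hx)).congr_deriv ?_
    simp [hw']; ring
  have hderiv_eq : ∀ x : ℝ, 0 < x → deriv (fun y => Real.exp (-y) * rho ν y) x = w' x :=
    fun x hx => (hω x hx).deriv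
  have hEE : ∀ x : ℝ, 0 < x →
      deriv (fun y => Real.exp (-y) * rho ν y) =ᶠ[𝓝 x] w' := by
    intro x hx
    filter_upwards [Ioi_mem_nhds hx] with y hy
    exact hderiv_eq y hy
  have hw'deriv : ∀ x : ℝ, 0 < x → HasDerivAt w'
      (Real.exp (-x) * (rho ν x + 2 * rho (ν - 1) x + rho (ν - 2) x)) x := by
    intro x hx
    have d1 := ((he x).mul (rho_hasDerivAt ν hx)).neg
    have d2 := (he x).mul (rho_hasDerivAt (ν - 1) hx)
    have hee : ν - 1 - 1 = ν - 2 := by ring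
    rw [hee] at d2
    refine (d1.sub d2).congr_deriv ?_
    ring
  constructor
  · intro x hx
    refine ⟨(hω x hx).differentiableAt, ?_⟩
    rw [(hEE x hx).differentiableAt_iff]
    exact (hw'deriv x hx).differentiableAt
  · intro x hx
    have h2 : deriv (deriv fun y => Real.exp (-y) * rho ν y) x =
        Real.exp (-x) * (rho ν x + 2 * rho (ν - 1) x + rho (ν - 2) x) := by
      rw [(hEE x hx).deriv_eq]
      exact (hw'deriv x hx).deriv
    rw [h2, hderiv_eq x hx, hw']
    have hrec := rho_rec ν hx
    linear_combination (-Real.exp (-x)) * hrec
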